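/- Let t₁ < t₂ < ... enumerate the distinct imaginary parts of the non-trivial zeta zeros with positive imaginary part, and let Z_n be the set of zeros with imaginary part t_n. Suppose n > 1 and d(Z_n) > d(Z_i) for all i with 1 ≤ i < n, where d(Z_k) is the diameter (max difference of real parts within Z_k). Then the least element of Z_n (in the coordinatewise order) is a minimal element of the poset Z of all such zeros. -/
import Mathlib


open Complex

def cle (a b : ℂ) : Prop := a.re ≤ b.re ∧ a.im ≤ b.im

def Zup : Set ℂ := {s | riemannZeta s = 0 ∧ 0 < s.re ∧ s.re < 1 ∧ 0 < s.im}

noncomputable def diam (S : Set ℂ) : ℝ :=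
  sSup {x | ∃ s1 ∈ S, ∃ s2 ∈ S, x = s1.re - s2.re}

lemma diffset_finite {S : Set ℂ} (h : S.Finite) :
    {x | ∃ s1 ∈ S, ∃ s2 ∈ S, x = s1.re - s2.re}.Finite := by
  have he : {x | ∃ s1 ∈ S, ∃ s2 ∈ S, x = s1.re - s2.re}
      = Set.image2 (fun a b : ℂ => a.re - b.re) S S := by
    ext x
    simp [Set.mem_image2, eq_comm]
  rw [he]
  exact h.image2 _ h

theorem least_of_record_diameter_is_minimal
    (t : ℕ → ℝ) (hmono : StrictMono t)
    (henum : ∀ s ∈ Zup, ∃ n, s.im = t n)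
    (Zn : ℕ → Set ℂ) (hZn : ∀ n, Zn n = {s ∈ Zup | s.im = t n})
    (hne : ∀ n, (Zn n).Nonempty) (hfin : ∀ n, (Zn n).Finite)
    (hsym : ∀ s : ℂ, riemannZeta s = 0 → 0 < s.re → s.re < 1 →
      riemannZeta (1 - (starRingEnd ℂ) s) = 0)
    (n : ℕ) (hn : 0 < n) (hd : ∀ i < n, diam (Zn i) < diam (Zn n))
    (a : ℂ) (ha : a ∈ Zn n) (hleast : ∀ b ∈ Zn n, cle a b) :
    ∀ c ∈ Zup, cle c a → c = a := by
  -- mirror lemma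
  have hmir : ∀ s ∈ Zup, (⟨1 - s.re, s.im⟩ : ℂ) ∈ Zup := by
    intro s hs
    obtain ⟨h0, h1, h2, h3⟩ := hs
    have hz := hsym s h0 h1 h2
    have he : (1 - (starRingEnd ℂ) s) = (⟨1 - s.re, s.im⟩ : ℂ) := by
      apply Complex.ext <;> simp
    rw [he] at hz
    exact ⟨hz, by simpa using h2, by simpa using h1, h3⟩
  intro c hc hca
  obtain ⟨m, hm⟩ := henum c hc
  have haZ := ha
  rw [hZn n] at haZ
  obtain ⟨haU, haim⟩ := haZ
  have hmn : m ≤ n := hmono.le_iff_le.mp (by rw [← hm, ← haim]; exact hca.2)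
  rcases lt_or_eq_of_le hmn with hlt | heq
  · exfalso
    have hcZ : c ∈ Zn m := by rw [hZn m]; exact ⟨hc, hm⟩
    have hc' : (⟨1 - c.re, c.im⟩ : ℂ) ∈ Zn m := by
      rw [hZn m]; exact ⟨hmir c hc, hm⟩
    -- diam (Zn m) ≥ 1 - 2 c.re
    have h1 : (1 : ℝ) - 2 * c.re ≤ diam (Zn m) := by
      apply le_csSup ((diffset_finite (hfin m)).bddAbove)
      exact ⟨⟨1 - c.re, c.im⟩, hc', c, hcZ, by simp; ring⟩
    -- diam (Zn n) ≤ 1 - 2 a.re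
    have h2 : diam (Zn n) ≤ 1 - 2 * a.re := by
      have hnonempty : {x | ∃ s1 ∈ Zn n, ∃ s2 ∈ Zn n, x = s1.re - s2.re}.Nonempty :=
        ⟨0, a, ha, a, ha, by ring⟩
      apply csSup_le hnonempty
      rintro x ⟨s1, hs1, s2, hs2, rfl⟩
      have hs1U : s1 ∈ Zup := by rw [hZn n] at hs1; exact hs1.1
      have hs1im : s1.im = t n := by rw [hZn n] at hs1; exact hs1.2
      have hm1 : (⟨1 - s1.re, s1.im⟩ : ℂ) ∈ Zn n := by
        rw [hZn n]; exact ⟨hmir s1 hs1U, hs1im⟩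
      have hle1 := (hleast _ hm1).1
      have hle2 := (hleast s2 hs2).1
      simp only at hle1
      linarith
    have hce : c.re ≤ a.re := hca.1
    have := hd m hlt
    linarith
  · subst heq
    have hcZ : c ∈ Zn m := by rw [hZn m]; exact ⟨hc, hm⟩
    have h1 := (hleast c hcZ).1
    apply Complex.ext
    · linarith [hca.1]
    · rw [hm, haim]
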